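/- arXiv:1403.7711 — 2 statements merged into one kernel-verified Lean document; each statement's English description precedes it below -/
import Mathlib

section
/- Let μ and μ̃ be probability measures on a product space X × X with μ ≪ μ̃, let μ̃ be symmetric (invariant under the swap (x,x') ↦ (x',x)), and suppose dμ/dμ̃(x,x') > 0 μ̃-a.e. Then μ^⊤ (the pushforward of μ under the swap) is mutually absolutely continuous with μ, and dμ^⊤/dμ(x,x') = (dμ/dμ̃)(x',x) / (dμ/dμ̃)(x,x') μ-almost everywhere. -/
open MeasureTheory

/-- Tierney's lemma: if `μ ≪ μ̃` on `X × X`, `μ̃` is symmetric under the swap and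
`dμ/dμ̃ > 0` `μ̃`-a.e., then `μ^⊤ = μ ∘ swap⁻¹` is mutually absolutely continuous
with `μ`, and `dμ^⊤/dμ(x,x') = (dμ/dμ̃)(x',x)/(dμ/dμ̃)(x,x')` `μ`-a.e. -/
theorem swap_rnDeriv_ratio {X : Type*} [MeasurableSpace X]
    (μ μt : Measure (X × X)) [IsProbabilityMeasure μ] [IsProbabilityMeasure μt]
    (hac : μ ≪ μt) (hsymm : μt.map Prod.swap = μt)
    (hpos : ∀ᵐ p ∂μt, 0 < μ.rnDeriv μt p) :
    (μ.map Prod.swap) ≪ μ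
    ∧ μ ≪ (μ.map Prod.swap)
    ∧ (∀ᵐ p ∂μ,
        (μ.map Prod.swap).rnDeriv μ p
          = μ.rnDeriv μt (p.2, p.1) / μ.rnDeriv μt p) := by
  have hemb : MeasurableEmbedding (Prod.swap : X × X → X × X) :=
    (MeasurableEquiv.prodComm (α := X) (β := X)).measurableEmbedding
  -- μt ≪ μ
  have hptac : μt ≪ μ := by
    have h := withDensity_absolutelyContinuous' (μ := μt)
      (Measure.measurable_rnDeriv μ μt).aemeasurable
      (hpos.mono fun p hp => hp.ne')
    rwa [Measure.withDensity_rnDeriv_eq μ μt hac] at h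
  -- μ^⊤ ≪ μt and μt ≪ μ^⊤
  have htac : μ.map Prod.swap ≪ μt := by
    have := hac.map (f := Prod.swap) hemb.measurable
    rwa [hsymm] at this
  have hact : μt ≪ μ.map Prod.swap := by
    have := hptac.map (f := Prod.swap) hemb.measurable
    rwa [hsymm] at this
  refine ⟨htac.trans hptac, hac.trans hact, ?_⟩
  -- key: rnDeriv of the mapped measure
  have hkey : (μ.map Prod.swap).rnDeriv μt =ᵐ[μt] fun p => μ.rnDeriv μt (p.2, p.1) := by
    have h := hemb.rnDeriv_map μ μt
    rw [hsymm] at h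
    -- h : (fun x ↦ (μ.map swap).rnDeriv μt (swap x)) =ᵐ[μt] μ.rnDeriv μt
    have h' : ∀ᵐ p ∂(μt.map Prod.swap),
        (μ.map Prod.swap).rnDeriv μt p = μ.rnDeriv μt (p.2, p.1) := by
      rw [hemb.ae_map_iff]
      filter_upwards [h] with p hp
      simpa using hp
    rwa [hsymm] at h'
  have hchain : (μ.map Prod.swap).rnDeriv μt * μt.rnDeriv μ
      =ᵐ[μ] (μ.map Prod.swap).rnDeriv μ :=
    Measure.rnDeriv_mul_rnDeriv htac
  have hinv : (μ.rnDeriv μt)⁻¹ =ᵐ[μ] μt.rnDeriv μ := Measure.inv_rnDeriv hac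
  filter_upwards [hchain, hinv, hac hkey] with p h1 h2 h3
  rw [← h1, Pi.mul_apply, h3, ← h2, Pi.inv_apply, div_eq_mul_inv]
end

section
/- Let μ̃ be a symmetric σ-finite measure on X × X and μ ≪ μ̃ a probability measure with density f = dμ/dμ̃. Define α(x,x') = min(1, f(x',x)/f(x,x')) on the set where f(x,x') > 0 (and α = 0 elsewhere). Then the function (x,x') ↦ f(x,x') α(x,x') is symmetric in (x, x') μ̃-a.e.; consequently the Metropolis–Hastings kernel built from the proposal and this acceptance probability is reversible with respect to the first marginal of μ. -/
open MeasureTheory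

/-! Wherever the density `f` is finite, `f · α = min (f, f ∘ swap)`, which is visibly symmetric.
`f` is finite `μ̃`-a.e. because it is a Radon–Nikodym derivative, and so is `f ∘ swap` because `μ̃`
is swap-invariant. -/

lemma ENNReal.mul_min_one_div_self {a : ENNReal} (b : ENNReal) (ha : a ≠ ⊤) :
    a * min 1 (b / a) = min a b := by
  rcases eq_or_ne a 0 with rfl | ha₀
  · simp
  · rw [mul_min, mul_one, ENNReal.mul_div_cancel ha₀ ha]

theorem mh_detailed_balance_symmetric_general {X : Type*} [MeasurableSpace X]
    (μt : Measure (X × X)) (hsymm : μt.map Prod.swap = μt)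
    (μ : Measure (X × X)) [IsProbabilityMeasure μ]
    (f : X × X → ENNReal) (hf : f = μ.rnDeriv μt)
    (α : X × X → ENNReal)
    (hα : α = fun p => if 0 < f p then min 1 (f (p.2, p.1) / f p) else 0) :
    (fun p : X × X => f p * α p)
      =ᵐ[μt] (fun p : X × X => f (p.2, p.1) * α (p.2, p.1)) := by
  -- the guard `0 < f p` in `α` is harmless: where it fails, `f p * x = 0 * x = 0` anyway
  have hfα : ∀ p, f p ≠ ⊤ → f p * α p = min (f p) (f (p.2, p.1)) := fun p hp => by
    simp only [hα, ← ENNReal.mul_min_one_div_self _ hp]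
    split_ifs with h
    · rfl
    · simp [nonpos_iff_eq_zero.mp (not_lt.mp h)]
  have hswap : MeasurePreserving Prod.swap μt μt := ⟨measurable_swap, hsymm⟩
  have hfin : ∀ᵐ p ∂μt, f p ≠ ⊤ := hf ▸ μ.rnDeriv_ne_top μt
  filter_upwards [hfin, hswap.quasiMeasurePreserving.ae hfin] with p hp hp'
  rw [hfα p hp, hfα (p.2, p.1) hp', min_comm]

/-- Generalised detailed balance: for a symmetric σ-finite measure `μ̃` on `X × X`
and `μ ≪ μ̃` a probability measure with density `f = dμ/dμ̃`, the function
`(x,x') ↦ f(x,x') α(x,x')` with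
`α(x,x') = min(1, f(x',x)/f(x,x'))` where `f(x,x') > 0` and `α = 0` elsewhere,
is `μ̃`-a.e. symmetric in `(x,x')`. -/
theorem mh_detailed_balance_symmetric {X : Type*} [MeasurableSpace X]
    (μt : Measure (X × X)) [SigmaFinite μt] (hsymm : μt.map Prod.swap = μt)
    (μ : Measure (X × X)) [IsProbabilityMeasure μ] (hac : μ ≪ μt)
    (f : X × X → ENNReal) (hf : f = μ.rnDeriv μt)
    (α : X × X → ENNReal)
    (hα : α = fun p => if 0 < f p then min 1 (f (p.2, p.1) / f p) else 0) :
    (fun p : X × X => f p * α p)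
      =ᵐ[μt] (fun p : X × X => f (p.2, p.1) * α (p.2, p.1)) :=
  mh_detailed_balance_symmetric_general μt hsymm μ f hf α hα
end
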